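/- Let 0 ≤ β < 1, 0 < ε < 1, a > 0, Δ_IN > 0, Δ_OUT > 0 be real numbers, and define erf(x) = (2/√π)·∫_0^x exp(-t²) dt. Set Γ = 1 + ε(β - 1), ζ_IN,0 = Δ_IN + ε²(1-β)², ζ_OUT,0 = Δ_OUT + (1-ε)²(1-β)², m̂₀ = (1-ε)·erf(a/√(2ζ_IN,0)) + βε·erf(a/√(2ζ_OUT,0)), and Σ̂₀ = (1-ε)·erf(a/√(2ζ_IN,0)) + ε·erf(a/√(2ζ_OUT,0)). Then m̂₀ - Γ·Σ̂₀ = (1-β)(1-ε)ε·[erf(a/√(2ζ_IN,0)) - erf(a/√(2ζ_OUT,0))], and m̂₀/Γ - Σ̂₀ ≥ 0 if and only if Δ_OUT - Δ_IN ≥ (1-β)²(2ε - 1). -/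

import Mathlib

/-!
The factorisation of `m̂₀ - Γ Σ̂₀` is a ring identity. Since `Γ > 0` and the prefactor
`(1-β)(1-ε)ε` is positive, `m̂₀/Γ - Σ̂₀` has the sign of
`erf (a/√(2ζ_IN)) - erf (a/√(2ζ_OUT))`; as `erf` is strictly increasing and `ζ ↦ a/√(2ζ)` strictly
decreasing, this is the sign of `ζ_OUT - ζ_IN = Δ_OUT - Δ_IN - (1-β)²(2ε-1)`.
-/

/-- The error function erf(x) = (2/√π)·∫₀ˣ exp(-t²) dt. -/
noncomputable def erf (x : ℝ) : ℝ :=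
  (2 / Real.sqrt Real.pi) * ∫ t in (0 : ℝ)..x, Real.exp (-t ^ 2)

theorem erf_strictMono : StrictMono erf := by
  have hint (u v : ℝ) : IntervalIntegrable (fun t => Real.exp (-t ^ 2)) MeasureTheory.volume u v :=
    (by fun_prop : Continuous fun t : ℝ => Real.exp (-t ^ 2)).intervalIntegrable u v
  intro x y hxy
  have hpos : 0 < ∫ t in x..y, Real.exp (-t ^ 2) :=
    intervalIntegral.intervalIntegral_pos_of_pos (hint x y) (fun t => Real.exp_pos _) hxy
  rw [← intervalIntegral.integral_interval_sub_left (hint 0 y) (hint 0 x), sub_pos] at hpos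
  exact mul_lt_mul_of_pos_left hpos (by positivity)

theorem erf_div_sqrt_two_mul_le_erf_div_sqrt_two_mul_iff {a ζ ζ' : ℝ} (ha : 0 < a)
    (hζ : 0 < ζ) (hζ' : 0 < ζ') :
    erf (a / Real.sqrt (2 * ζ')) ≤ erf (a / Real.sqrt (2 * ζ)) ↔ ζ ≤ ζ' := by
  rw [erf_strictMono.le_iff_le, div_le_div_iff_of_pos_left ha (by positivity) (by positivity),
    Real.sqrt_le_sqrt_iff (by positivity)]
  exact mul_le_mul_iff_of_pos_left two_pos

theorem huber_generalisation_consistency_condition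
    (β ε a ΔIN ΔOUT : ℝ)
    (hβ0 : 0 ≤ β) (hβ1 : β < 1) (hε0 : 0 < ε) (hε1 : ε < 1)
    (ha : 0 < a) (hIN : 0 < ΔIN) (hOUT : 0 < ΔOUT)
    (Γ ζIN ζOUT mh0 Sh0 : ℝ)
    (hΓ : Γ = 1 + ε * (β - 1))
    (hζIN : ζIN = ΔIN + ε ^ 2 * (1 - β) ^ 2)
    (hζOUT : ζOUT = ΔOUT + (1 - ε) ^ 2 * (1 - β) ^ 2)
    (hmh0 : mh0 = (1 - ε) * erf (a / Real.sqrt (2 * ζIN))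
        + β * ε * erf (a / Real.sqrt (2 * ζOUT)))
    (hSh0 : Sh0 = (1 - ε) * erf (a / Real.sqrt (2 * ζIN))
        + ε * erf (a / Real.sqrt (2 * ζOUT))) :
    mh0 - Γ * Sh0 = (1 - β) * (1 - ε) * ε *
        (erf (a / Real.sqrt (2 * ζIN)) - erf (a / Real.sqrt (2 * ζOUT))) ∧
    (0 ≤ mh0 / Γ - Sh0 ↔ (1 - β) ^ 2 * (2 * ε - 1) ≤ ΔOUT - ΔIN) := by
  have hζIN_pos : 0 < ζIN := by rw [hζIN]; positivity
  have hζOUT_pos : 0 < ζOUT := by rw [hζOUT]; positivity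
  have hΓ_pos : 0 < Γ := by rw [hΓ]; nlinarith
  have hprefactor : 0 < (1 - β) * (1 - ε) * ε :=
    mul_pos (mul_pos (sub_pos.mpr hβ1) (sub_pos.mpr hε1)) hε0
  have hfactor : mh0 - Γ * Sh0 = (1 - β) * (1 - ε) * ε *
      (erf (a / Real.sqrt (2 * ζIN)) - erf (a / Real.sqrt (2 * ζOUT))) := by
    rw [hmh0, hSh0, hΓ]; ring
  have hζ_sub : ζOUT - ζIN = ΔOUT - ΔIN - (1 - β) ^ 2 * (2 * ε - 1) := by
    rw [hζIN, hζOUT]; ring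
  refine ⟨hfactor, ?_⟩
  calc 0 ≤ mh0 / Γ - Sh0 ↔ 0 ≤ mh0 - Γ * Sh0 := by
        rw [sub_nonneg, le_div_iff₀ hΓ_pos, sub_nonneg, mul_comm]
    _ ↔ erf (a / Real.sqrt (2 * ζOUT)) ≤ erf (a / Real.sqrt (2 * ζIN)) := by
        rw [hfactor, mul_nonneg_iff_of_pos_left hprefactor, sub_nonneg]
    _ ↔ ζIN ≤ ζOUT := erf_div_sqrt_two_mul_le_erf_div_sqrt_two_mul_iff ha hζIN_pos hζOUT_pos
    _ ↔ (1 - β) ^ 2 * (2 * ε - 1) ≤ ΔOUT - ΔIN := by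
        rw [← sub_nonneg, hζ_sub, sub_nonneg]
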